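/- Let 𝒢₁ = (G₁, S, μ₁, l₁) and 𝒢₂ = (G₂, S, μ₂, l₂) be comparable reconciled gene trees, let λ be the lca-mapping of G₁ to S, and let v be an internal node of G₁ with v' = m(v) its correspondent in G₂. Then dist_S(μ₁(v), μ₂(v')) ≤ dist_S(λ(v), r(S)). -/
import Mathlib


open SimpleGraph

attribute [local instance] Classical.propDecidable

/-- A rooted tree: a finite connected acyclic graph with a distinguished root. -/
structure RTree (V : Type*) [Fintype V] where
  adj : SimpleGraph V
  isTree : adj.IsTree
  root : V

variable {V : Type*} [Fintype V]

/-- `Anc T a b` : `a` is an ancestor of `b` (i.e. `b ⪯ a`), expressed as: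
`a` lies on the (unique) path from the root to `b`. -/
def Anc (T : RTree V) (a b : V) : Prop :=
  T.adj.dist T.root b = T.adj.dist T.root a + T.adj.dist a b

/-- `IsChild T c p` : `c` is a child of `p`. -/
def IsChild (T : RTree V) (c p : V) : Prop :=
  T.adj.Adj c p ∧ Anc T p c

/-- The set of children of `v`. -/
def childSet (T : RTree V) (v : V) : Set V := {c | IsChild T c v}

/-- A leaf is a node with no children. -/
def IsLeaf (T : RTree V) (v : V) : Prop := ∀ c, ¬ IsChild T c v

/-- The clade of `v`: the set of leaves descending from `v`. -/
def clade (T : RTree V) (v : V) : Set V := {x | IsLeaf T x ∧ Anc T v x}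

/-- `w` is the lowest common ancestor of the set `X` in `T`. -/
def IsLCA (T : RTree V) (X : Set V) (w : V) : Prop :=
  (∀ x ∈ X, Anc T w x) ∧ ∀ w', (∀ x ∈ X, Anc T w' x) → Anc T w' w

/-- A species tree is a rooted binary tree: every internal node has exactly two children. -/
def IsSpeciesTree (S : RTree V) : Prop :=
  ∀ v, ¬ IsLeaf S v → (childSet S v).ncard = 2

/-- Number of leaves of a rooted tree. -/
noncomputable def numLeaves (T : RTree V) : ℕ := {v | IsLeaf T v}.ncard

/-- `Hsum S` = `H(S)`: the sum of root-to-internal-node distances in `S`. -/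
noncomputable def Hsum (S : RTree V) : ℕ :=
  ∑ v : V, if IsLeaf S v then 0 else S.adj.dist S.root v

inductive Evt | dup | spec | extant
deriving DecidableEq

/-- A reconciled gene tree with species tree `S`, whose leaves are labeled bijectively by
the set of genes `Γ`. -/
structure Recon (Γ : Type*) (VG : Type*) (VS : Type*) [Fintype VG] [Fintype VS]
    (S : RTree VS) where
  tree : RTree VG
  geneLeaf : Γ → VG
  geneLeaf_inj : Function.Injective geneLeaf
  geneLeaf_range : ∀ v, IsLeaf tree v ↔ ∃ g, geneLeaf g = v
  μ : VG → VS
  lbl : VG → Evt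
  internal_children : ∀ v, ¬ IsLeaf tree v → 2 ≤ (childSet tree v).ncard
  leaf_species : ∀ v, IsLeaf tree v → IsLeaf S (μ v)
  leaf_lbl : ∀ v, IsLeaf tree v → lbl v = Evt.extant
  internal_lbl : ∀ v, ¬ IsLeaf tree v → lbl v = Evt.dup ∨ lbl v = Evt.spec
  time_consistent : ∀ a b, Anc tree a b → Anc S (μ a) (μ b)
  spec_two_children : ∀ v, lbl v = Evt.spec →
    ¬ IsLeaf S (μ v) ∧ (childSet tree v).ncard = 2
  spec_separates : ∀ v, lbl v = Evt.spec →
    ∀ v₁ v₂, IsChild tree v₁ v → IsChild tree v₂ v → v₁ ≠ v₂ →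
      ∃ s₁ s₂, IsChild S s₁ (μ v) ∧ IsChild S s₂ (μ v) ∧ s₁ ≠ s₂ ∧
        ((Anc S s₁ (μ v₁) ∧ Anc S s₂ (μ v₂)) ∨ (Anc S s₂ (μ v₁) ∧ Anc S s₁ (μ v₂)))

variable {Γ : Type*} {VS VG₁ VG₂ : Type*} [Fintype VS] [Fintype VG₁] [Fintype VG₂]
  {S : RTree VS}

/-- The clade of a gene tree node, as a set of genes. -/
def gclade (𝒢 : Recon Γ VG₁ VS S) (v : VG₁) : Set Γ :=
  {g | Anc 𝒢.tree v (𝒢.geneLeaf g)}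

/-- Two reconciled gene trees (over the same species tree and gene set) are comparable if
corresponding extant genes map to the same species. -/
def Comparable (𝒢₁ : Recon Γ VG₁ VS S) (𝒢₂ : Recon Γ VG₂ VS S) : Prop :=
  ∀ g, 𝒢₁.μ (𝒢₁.geneLeaf g) = 𝒢₂.μ (𝒢₂.geneLeaf g)

/-- `m` is the correspondence map `v ↦ lca_{G₂}(L(G₁(v)))`. -/
def IsLcaMap (𝒢₁ : Recon Γ VG₁ VS S) (𝒢₂ : Recon Γ VG₂ VS S) (m : VG₁ → VG₂) : Prop :=
  ∀ v, IsLCA 𝒢₂.tree (𝒢₂.geneLeaf '' gclade 𝒢₁ v) (m v)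

/-- `μ` is the lca-mapping: every node maps to the lca of the species of its leaf descendants. -/
def UsesLcaMapping (𝒢 : Recon Γ VG₁ VS S) : Prop :=
  ∀ v, IsLCA S (𝒢.μ '' clade 𝒢.tree v) (𝒢.μ v)

/-- The path component `d_path(𝒢₁,𝒢₂)` (with `m` the lca correspondence map). -/
noncomputable def dPath (𝒢₁ : Recon Γ VG₁ VS S) (𝒢₂ : Recon Γ VG₂ VS S)
    (m : VG₁ → VG₂) : ℕ :=
  ∑ v : VG₁, S.adj.dist (𝒢₁.μ v) (𝒢₂.μ (m v))

/-- The label component `d_lbl(𝒢₁,𝒢₂)`. -/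
noncomputable def dLbl (𝒢₁ : Recon Γ VG₁ VS S) (𝒢₂ : Recon Γ VG₂ VS S)
    (m : VG₁ → VG₂) : ℕ :=
  {v : VG₁ | 𝒢₁.lbl v ≠ 𝒢₂.lbl (m v)}.ncard

/-- The asymmetric dissimilarity `d_asym = α·d_path + (1−α)·d_lbl`. -/
noncomputable def dAsym (α : ℝ) (𝒢₁ : Recon Γ VG₁ VS S) (𝒢₂ : Recon Γ VG₂ VS S)
    (m : VG₁ → VG₂) : ℝ :=
  α * (dPath 𝒢₁ 𝒢₂ m : ℝ) + (1 - α) * (dLbl 𝒢₁ 𝒢₂ m : ℝ)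

/-- The Path-Label Reconciliation dissimilarity `PLR(𝒢₁,𝒢₂)`, where `m₁₂`, `m₂₁` are the
lca correspondence maps in the two directions. -/
noncomputable def PLR (α : ℝ) (𝒢₁ : Recon Γ VG₁ VS S) (𝒢₂ : Recon Γ VG₂ VS S)
    (m₁₂ : VG₁ → VG₂) (m₂₁ : VG₂ → VG₁) : ℝ :=
  dAsym α 𝒢₁ 𝒢₂ m₁₂ + dAsym α 𝒢₂ 𝒢₁ m₂₁

/-- An edge `uv` (with `u` the parent of `v`) is redundant if both endpoints are duplications
mapped to the same species. -/
def RedundantEdge (𝒢 : Recon Γ VG₁ VS S) (u v : VG₁) : Prop :=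
  IsChild 𝒢.tree v u ∧ 𝒢.μ u = 𝒢.μ v ∧ 𝒢.lbl u = Evt.dup ∧ 𝒢.lbl v = Evt.dup

/-- A reconciled gene tree is least duplication-resolved if it has no redundant edge. -/
def LeastDupResolved (𝒢 : Recon Γ VG₁ VS S) : Prop :=
  ∀ u v, ¬ RedundantEdge 𝒢 u v

/-- `𝒢'` is obtained from `𝒢` by contracting the edge `uv` (`u` the parent of `v`), i.e.
deleting `v` and attaching its children to `u`; `φ` is the corresponding quotient map. -/
def IsContractionOf (𝒢 : Recon Γ VG₁ VS S) (u v : VG₁) (𝒢' : Recon Γ VG₂ VS S)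
    (φ : VG₁ → VG₂) : Prop :=
  Function.Surjective φ ∧
  φ u = φ v ∧
  (∀ a b, φ a = φ b → a = b ∨ (a = u ∧ b = v) ∨ (a = v ∧ b = u)) ∧
  (∀ x y, 𝒢'.tree.adj.Adj x y ↔
    ∃ a b, φ a = x ∧ φ b = y ∧ 𝒢.tree.adj.Adj a b ∧ ¬(a = u ∧ b = v) ∧ ¬(a = v ∧ b = u)) ∧
  𝒢'.tree.root = φ 𝒢.tree.root ∧
  (∀ g, 𝒢'.geneLeaf g = φ (𝒢.geneLeaf g)) ∧
  (∀ a, 𝒢'.μ (φ a) = 𝒢.μ a) ∧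
  (∀ a, 𝒢'.lbl (φ a) = 𝒢.lbl a)

/-- Symmetrized redundancy relation on nodes. -/
def RedundantAdj (𝒢 : Recon Γ VG₁ VS S) (a b : VG₁) : Prop :=
  RedundantEdge 𝒢 a b ∨ RedundantEdge 𝒢 b a

/-- `𝒢'` is the least duplication-resolved tree `LR(𝒢)` obtained by contracting every
redundant edge of `𝒢`; `φ` is the corresponding quotient map. -/
def IsLROf (𝒢 : Recon Γ VG₁ VS S) (𝒢' : Recon Γ VG₂ VS S) (φ : VG₁ → VG₂) : Prop :=
  Function.Surjective φ ∧
  (∀ a b, φ a = φ b ↔ Relation.EqvGen (RedundantAdj 𝒢) a b) ∧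
  (∀ x y, 𝒢'.tree.adj.Adj x y ↔
    ∃ a b, φ a = x ∧ φ b = y ∧ 𝒢.tree.adj.Adj a b ∧ ¬ RedundantAdj 𝒢 a b) ∧
  𝒢'.tree.root = φ 𝒢.tree.root ∧
  (∀ g, 𝒢'.geneLeaf g = φ (𝒢.geneLeaf g)) ∧
  (∀ a, 𝒢'.μ (φ a) = 𝒢.μ a) ∧
  (∀ a, 𝒢'.lbl (φ a) = 𝒢.lbl a)

/-- Isomorphism of reconciled gene trees: a leaf-fixing bijection preserving edges,
species maps and event labels. -/
def ReconIso (𝒢₁ : Recon Γ VG₁ VS S) (𝒢₂ : Recon Γ VG₂ VS S) : Prop :=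
  ∃ φ : VG₁ ≃ VG₂,
    (∀ g, φ (𝒢₁.geneLeaf g) = 𝒢₂.geneLeaf g) ∧
    (∀ a b, 𝒢₂.tree.adj.Adj (φ a) (φ b) ↔ 𝒢₁.tree.adj.Adj a b) ∧
    (∀ v, 𝒢₂.μ (φ v) = 𝒢₁.μ v) ∧
    (∀ v, 𝒢₂.lbl (φ v) = 𝒢₁.lbl v)

/-- Exactly one gene per species: the gene set is the set of species leaves, and each gene
resides in its own species. -/
def OneGenePerSpecies (𝒢 : Recon {s : VS // IsLeaf S s} VG₁ VS S) : Prop :=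
  ∀ g, 𝒢.μ (𝒢.geneLeaf g) = g.1


lemma anc_total {T : RTree V} {a b c : V} (ha : Anc T a c) (hb : Anc T b c) :
    Anc T a b ∨ Anc T b a := by
  have hconn := T.isTree.isConnected
  obtain ⟨p1, hp1⟩ := hconn.exists_walk_length_eq_dist T.root a
  obtain ⟨p2, hp2⟩ := hconn.exists_walk_length_eq_dist a c
  obtain ⟨q1, hq1⟩ := hconn.exists_walk_length_eq_dist T.root b
  obtain ⟨q2, hq2⟩ := hconn.exists_walk_length_eq_dist b c
  have hWlen : (p1.append p2).length = T.adj.dist T.root c := by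
    rw [SimpleGraph.Walk.length_append, hp1, hp2, ha]
  have hW : (p1.append p2).IsPath := SimpleGraph.Walk.isPath_of_length_eq_dist _ hWlen
  have hW2len : (q1.append q2).length = T.adj.dist T.root c := by
    rw [SimpleGraph.Walk.length_append, hq1, hq2, hb]
  have hW2 : (q1.append q2).IsPath := SimpleGraph.Walk.isPath_of_length_eq_dist _ hW2len
  obtain ⟨P, -, huniq⟩ := T.isTree.existsUnique_path T.root c
  have hEq : p1.append p2 = q1.append q2 := by
    rw [huniq _ hW, huniq _ hW2]
  have hbmem : b ∈ (p1.append p2).support := by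
    rw [hEq, SimpleGraph.Walk.mem_support_append_iff]
    exact Or.inr q2.start_mem_support
  rw [SimpleGraph.Walk.mem_support_append_iff] at hbmem
  rcases hbmem with hmem | hmem
  · -- b on path root → a, so b is ancestor of a
    right
    have h1 : T.adj.dist T.root b ≤ (p1.takeUntil b hmem).length := SimpleGraph.dist_le _
    have h2 : T.adj.dist b a ≤ (p1.dropUntil b hmem).length := SimpleGraph.dist_le _
    have h3 : (p1.takeUntil b hmem).length + (p1.dropUntil b hmem).length = p1.length := by
      have := congrArg SimpleGraph.Walk.length (p1.take_spec hmem)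
      rwa [SimpleGraph.Walk.length_append] at this
    have htri : T.adj.dist T.root a ≤ T.adj.dist T.root b + T.adj.dist b a :=
      hconn.dist_triangle
    have : T.adj.dist T.root b + T.adj.dist b a ≤ T.adj.dist T.root a := by
      rw [← hp1, ← h3]; omega
    unfold Anc; omega
  · -- b on path a → c, so a is ancestor of b
    left
    have h1 : T.adj.dist a b ≤ (p2.takeUntil b hmem).length := SimpleGraph.dist_le _
    have h2 : T.adj.dist b c ≤ (p2.dropUntil b hmem).length := SimpleGraph.dist_le _
    have h3 : (p2.takeUntil b hmem).length + (p2.dropUntil b hmem).length = p2.length := by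
      have := congrArg SimpleGraph.Walk.length (p2.take_spec hmem)
      rwa [SimpleGraph.Walk.length_append] at this
    have htri : T.adj.dist T.root b ≤ T.adj.dist T.root a + T.adj.dist a b :=
      hconn.dist_triangle
    have hsum : T.adj.dist a b + T.adj.dist b c ≤ T.adj.dist a c := by
      rw [← hp2, ← h3]; omega
    unfold Anc at *; omega

/-- for an internal node `v` of `G₁` with correspondent `v' = m(v)`,
`dist_S(μ₁(v), μ₂(v')) ≤ dist_S(λ(v), r(S))` where `λ` is the lca-mapping of `G₁` to `S`. -/
theorem stmt10 (hS : IsSpeciesTree S)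
    (𝒢₁ : Recon Γ VG₁ VS S) (𝒢₂ : Recon Γ VG₂ VS S)
    (hcomp : Comparable 𝒢₁ 𝒢₂)
    (lam : VG₁ → VS) (hlam : ∀ w, IsLCA S (𝒢₁.μ '' clade 𝒢₁.tree w) (lam w))
    (m : VG₁ → VG₂) (hm : IsLcaMap 𝒢₁ 𝒢₂ m)
    (v : VG₁) (hv : ¬ IsLeaf 𝒢₁.tree v) :
    S.adj.dist (𝒢₁.μ v) (𝒢₂.μ (m v)) ≤ S.adj.dist (lam v) S.root := by
  have ha : Anc S (𝒢₁.μ v) (lam v) := by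
    apply (hlam v).2
    rintro _ ⟨x, hx, rfl⟩
    exact 𝒢₁.time_consistent v x hx.2
  have hb : Anc S (𝒢₂.μ (m v)) (lam v) := by
    apply (hlam v).2
    rintro _ ⟨x, hx, rfl⟩
    obtain ⟨g, rfl⟩ := (𝒢₁.geneLeaf_range x).mp hx.1
    have hg : g ∈ gclade 𝒢₁ v := hx.2
    have := (hm v).1 (𝒢₂.geneLeaf g) ⟨g, hg, rfl⟩
    have h2 := 𝒢₂.time_consistent (m v) (𝒢₂.geneLeaf g) this
    rwa [← hcomp g] at h2
  have hrc : S.adj.dist S.root (lam v) = S.adj.dist (lam v) S.root := SimpleGraph.dist_comm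
  rcases anc_total ha hb with h | h
  · unfold Anc at *; omega
  · rw [SimpleGraph.dist_comm]; unfold Anc at *; omega
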